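/- arXiv:2407.15453 — 2 statements merged into one kernel-verified Lean document; each statement's English description precedes it below -/
import Mathlib

section
/- (Bhatia–Davis inequality) Let X be a real random variable with m ≤ X ≤ M almost surely, mean μ and variance σ². Then σ² ≤ (M − μ)(μ − m). -/
open MeasureTheory ProbabilityTheory

theorem bhatia_davis {Ω : Type*} [MeasurableSpace Ω] (μ : Measure Ω)
    [IsProbabilityMeasure μ] (X : Ω → ℝ) (hX : Measurable X)
    (m M : ℝ) (hbd : ∀ᵐ ω ∂μ, m ≤ X ω ∧ X ω ≤ M)
    (μX : ℝ) (hμX : μX = ∫ ω, X ω ∂μ) :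
    variance X μ ≤ (M - μX) * (μX - m) := by
  have hbound : ∀ᵐ ω ∂μ, ‖X ω‖ ≤ max |m| |M| := by
    filter_upwards [hbd] with ω ⟨h1, h2⟩
    rw [Real.norm_eq_abs, abs_le]
    constructor
    · calc -(max |m| |M|) ≤ -|m| := by simp
        _ ≤ m := neg_abs_le m
        _ ≤ X ω := h1
    · exact h2.trans ((le_abs_self M).trans (le_max_right _ _))
  have hmem2 : MemLp X 2 μ :=
    MemLp.of_bound hX.aestronglyMeasurable _ hbound
  have hmem1 : MemLp X 1 μ := hmem2.mono_exponent (by norm_num)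
  have hint : Integrable X μ := memLp_one_iff_integrable.mp hmem1
  have hintsq : Integrable (fun ω => X ω ^ 2) μ := by
    simpa [sq] using hmem2.integrable_sq
  have hvar : variance X μ = (∫ ω, X ω ^ 2 ∂μ) - (∫ ω, X ω ∂μ) ^ 2 := by
    simpa using variance_eq_sub hmem2
  have hintf : Integrable (fun ω => (M - X ω) * (X ω - m)) μ := by
    have : (fun ω => (M - X ω) * (X ω - m)) =
        (fun ω => -(X ω ^ 2) + (M + m) * X ω - M * m) := by
      funext ω; ring
    rw [this]
    exact ((hintsq.neg.add (hint.const_mul _)).sub (integrable_const _))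
  have hpos : 0 ≤ ∫ ω, (M - X ω) * (X ω - m) ∂μ := by
    apply integral_nonneg_of_ae
    filter_upwards [hbd] with ω ⟨h1, h2⟩
    exact mul_nonneg (by linarith) (by linarith)
  have hexp : ∫ ω, (M - X ω) * (X ω - m) ∂μ =
      -(∫ ω, X ω ^ 2 ∂μ) + (M + m) * (∫ ω, X ω ∂μ) - M * m := by
    have : (fun ω => (M - X ω) * (X ω - m)) =
        (fun ω => -(X ω ^ 2) + (M + m) * X ω - M * m) := by
      funext ω; ring
    have h1 : Integrable (fun ω => -(X ω ^ 2) + (M + m) * X ω) μ :=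
      hintsq.neg.add (hint.const_mul _)
    have h2 : Integrable (fun ω => -(X ω ^ 2)) μ := hintsq.neg
    have h3 : Integrable (fun ω => (M + m) * X ω) μ := hint.const_mul _
    rw [this, integral_sub h1 (integrable_const _),
      integral_add h2 h3, integral_neg, integral_const_mul, integral_const]
    simp
  rw [hvar, ← hμX]
  rw [hexp, ← hμX] at hpos
  nlinarith [hpos]
end

section
/- Suppose for each j = 1,...,J random vectors ŵ_j and points w*_j satisfy E‖ŵ_j − w*_{j-1}‖² ≤ 2δ_j/μ_{j-1} and E‖ŵ_j − w*_j‖² ≤ δ_j/μ_j, with μ_j = 2μ_{j-1}. Then E[(∑_{j=1}^J μ_j ‖w*_J − ŵ_j‖)²] ≤ 16 J ∑_{j=1}^J μ_j δ_j. -/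
open MeasureTheory

open Finset in
lemma key_aux {E : Type*} [NormedAddCommGroup E] (μ : ℕ → ℝ) (hμnn : ∀ j, 0 ≤ μ j)
    (hsum : ∀ m, ∑ t ∈ Icc 1 m, μ t ≤ μ (m + 1))
    (v w : ℕ → E) :
    ∀ m, ∑ t ∈ Icc 1 m, μ t * ‖w m - v t‖ ≤
      ∑ j ∈ Icc 1 m, μ j * (2 * ‖v j - w j‖ + ‖v j - w (j - 1)‖) := by
  intro m
  induction m with
  | zero => simp
  | succ m ih =>
    rw [Finset.sum_Icc_succ_top (by omega : 1 ≤ m + 1),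
        Finset.sum_Icc_succ_top (by omega : 1 ≤ m + 1)]
    have A : ∑ t ∈ Icc 1 m, μ t * ‖w (m + 1) - v t‖ ≤
        (∑ t ∈ Icc 1 m, μ t * ‖w m - v t‖) + (∑ t ∈ Icc 1 m, μ t) * ‖w (m + 1) - w m‖ := by
      rw [Finset.sum_mul, ← Finset.sum_add_distrib]
      refine Finset.sum_le_sum fun t _ => ?_
      have h := norm_sub_le_norm_sub_add_norm_sub (w (m + 1)) (w m) (v t)
      nlinarith [hμnn t, norm_nonneg (w (m + 1) - v t)]
    have B : (∑ t ∈ Icc 1 m, μ t) * ‖w (m + 1) - w m‖ ≤ μ (m + 1) * ‖w (m + 1) - w m‖ :=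
      mul_le_mul_of_nonneg_right (hsum m) (norm_nonneg _)
    have C : ‖w (m + 1) - w m‖ ≤ ‖v (m + 1) - w (m + 1)‖ + ‖v (m + 1) - w m‖ := by
      have h : w (m + 1) - w m = -(v (m + 1) - w (m + 1)) + (v (m + 1) - w m) := by abel
      calc ‖w (m + 1) - w m‖ = ‖-(v (m + 1) - w (m + 1)) + (v (m + 1) - w m)‖ := by rw [h]
        _ ≤ ‖-(v (m + 1) - w (m + 1))‖ + ‖v (m + 1) - w m‖ := norm_add_le _ _
        _ = ‖v (m + 1) - w (m + 1)‖ + ‖v (m + 1) - w m‖ := by rw [norm_neg]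
    have D : ‖w (m + 1) - v (m + 1)‖ = ‖v (m + 1) - w (m + 1)‖ := norm_sub_rev _ _
    simp only [Nat.add_sub_cancel]
    nlinarith [hμnn (m + 1)]

theorem sum_distance_second_moment {Ω : Type*} [MeasurableSpace Ω] (P : Measure Ω)
    [IsProbabilityMeasure P] (n : ℕ) (J : ℕ) (hJ : 1 ≤ J)
    (μ : ℕ → ℝ) (hμ0 : 0 < μ 0) (hμ : ∀ j, μ (j + 1) = 2 * μ j)
    (δ : ℕ → ℝ) (hδ : ∀ j, 0 ≤ δ j)
    (what : ℕ → Ω → EuclideanSpace ℝ (Fin n))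
    (hmeas : ∀ j, AEStronglyMeasurable (what j) P)
    (wstar : ℕ → EuclideanSpace ℝ (Fin n))
    (h1 : ∀ j, 1 ≤ j → j ≤ J →
      (∫ ω, ‖what j ω - wstar (j - 1)‖ ^ 2 ∂P) ≤ 2 * δ j / μ (j - 1))
    (h2 : ∀ j, 1 ≤ j → j ≤ J →
      (∫ ω, ‖what j ω - wstar j‖ ^ 2 ∂P) ≤ δ j / μ j) :
    (∫ ω, (∑ j ∈ Finset.Icc 1 J, μ j * ‖wstar J - what j ω‖) ^ 2 ∂P) ≤
      16 * J * ∑ j ∈ Finset.Icc 1 J, μ j * δ j := by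
  have hμpos : ∀ j, 0 < μ j := by
    intro j
    induction j with
    | zero => exact hμ0
    | succ j ih => rw [hμ]; linarith
  have hsum : ∀ m, ∑ t ∈ Finset.Icc 1 m, μ t ≤ μ (m + 1) := by
    intro m
    induction m with
    | zero => simpa using (hμpos 1).le
    | succ m ih =>
      rw [Finset.sum_Icc_succ_top (by omega : 1 ≤ m + 1), hμ (m + 1)]
      linarith
  have hRHSnn : 0 ≤ 16 * (J : ℝ) * ∑ j ∈ Finset.Icc 1 J, μ j * δ j := by
    have h := Finset.sum_nonneg (fun j (_ : j ∈ Finset.Icc 1 J) => mul_nonneg (hμpos j).le (hδ j))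
    positivity
  set f : Ω → ℝ := fun ω => ∑ j ∈ Finset.Icc 1 J, μ j * ‖wstar J - what j ω‖ with hf
  by_cases hint : Integrable (fun ω => f ω ^ 2) P
  swap
  · rw [integral_undef hint]; exact hRHSnn
  have hfnn : ∀ ω, 0 ≤ f ω := fun ω =>
    Finset.sum_nonneg fun j _ => mul_nonneg (hμpos j).le (norm_nonneg _)
  -- measurability
  have hxm : ∀ j k, AEStronglyMeasurable (fun ω => ‖what j ω - wstar k‖ ^ 2) P := fun j k =>
    (((hmeas j).sub aestronglyMeasurable_const).norm.pow 2)
  -- integrability of squared distances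
  have hxint : ∀ j ∈ Finset.Icc 1 J, ∀ k,
      Integrable (fun ω => ‖what j ω - wstar k‖ ^ 2) P := by
    intro j hj k
    refine Integrable.mono'
      ((hint.const_mul (2 / (μ j) ^ 2)).add (integrable_const (2 * ‖wstar J - wstar k‖ ^ 2)))
      (hxm j k) ?_
    filter_upwards with ω
    have hb : μ j * ‖wstar J - what j ω‖ ≤ f ω :=
      Finset.single_le_sum (f := fun i => μ i * ‖wstar J - what i ω‖)
        (fun i _ => mul_nonneg (hμpos i).le (norm_nonneg _)) hj
    have htri : ‖what j ω - wstar k‖ ≤ ‖wstar J - what j ω‖ + ‖wstar J - wstar k‖ := by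
      have h := norm_sub_le_norm_sub_add_norm_sub (what j ω) (wstar J) (wstar k)
      rw [norm_sub_rev (what j ω) (wstar J)] at h
      exact h
    have ha : ‖wstar J - what j ω‖ ≤ f ω / μ j := (le_div_iff₀ (hμpos j)).mpr (by linarith [hb])
    have hx : ‖what j ω - wstar k‖ ≤ f ω / μ j + ‖wstar J - wstar k‖ := by linarith
    have hfm : 0 ≤ f ω / μ j := div_nonneg (hfnn ω) (hμpos j).le
    have hsq : ‖what j ω - wstar k‖ ^ 2 ≤ (f ω / μ j + ‖wstar J - wstar k‖) ^ 2 :=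
      pow_le_pow_left₀ (norm_nonneg _) hx 2
    have hexp : (f ω / μ j + ‖wstar J - wstar k‖) ^ 2 ≤
        2 / (μ j) ^ 2 * f ω ^ 2 + 2 * ‖wstar J - wstar k‖ ^ 2 := by
      have hne : μ j ≠ 0 := (hμpos j).ne'
      have h2 : 2 / μ j ^ 2 * f ω ^ 2 = 2 * (f ω / μ j) ^ 2 := by
        field_simp
      nlinarith [sq_nonneg (f ω / μ j - ‖wstar J - wstar k‖)]
    rw [Real.norm_eq_abs, abs_of_nonneg (by positivity)]
    simp only [Pi.add_apply]
    linarith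
  -- pointwise bound : f ω ^ 2 ≤ g ω
  set g : Ω → ℝ := fun ω => (J : ℝ) * ∑ j ∈ Finset.Icc 1 J,
      μ j ^ 2 * (8 * ‖what j ω - wstar j‖ ^ 2 + 2 * ‖what j ω - wstar (j - 1)‖ ^ 2) with hg
  have hgle : ∀ ω, f ω ^ 2 ≤ g ω := by
    intro ω
    have hkey := key_aux μ (fun j => (hμpos j).le) hsum (fun j => what j ω) wstar J
    have h1' : f ω ^ 2 ≤
        (∑ j ∈ Finset.Icc 1 J, μ j *
          (2 * ‖what j ω - wstar j‖ + ‖what j ω - wstar (j - 1)‖)) ^ 2 :=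
      pow_le_pow_left₀ (hfnn ω) hkey 2
    have hCS := sq_sum_le_card_mul_sum_sq
      (s := Finset.Icc 1 J)
      (f := fun j => μ j * (2 * ‖what j ω - wstar j‖ + ‖what j ω - wstar (j - 1)‖))
    rw [Nat.card_Icc] at hCS
    simp only [Nat.add_sub_cancel] at hCS
    have hterm : ∀ j ∈ Finset.Icc 1 J,
        (μ j * (2 * ‖what j ω - wstar j‖ + ‖what j ω - wstar (j - 1)‖)) ^ 2 ≤
        μ j ^ 2 * (8 * ‖what j ω - wstar j‖ ^ 2 + 2 * ‖what j ω - wstar (j - 1)‖ ^ 2) := by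
      intro j _
      have := sq_nonneg (2 * ‖what j ω - wstar j‖ - ‖what j ω - wstar (j - 1)‖)
      nlinarith [sq_nonneg (μ j)]
    have hmul : (J : ℝ) * ∑ j ∈ Finset.Icc 1 J,
        (μ j * (2 * ‖what j ω - wstar j‖ + ‖what j ω - wstar (j - 1)‖)) ^ 2 ≤ g ω :=
      mul_le_mul_of_nonneg_left (Finset.sum_le_sum hterm) (Nat.cast_nonneg J)
    calc f ω ^ 2 ≤ _ := h1'
      _ ≤ _ := hCS
      _ ≤ g ω := hmul
  -- integrability of g
  have htermint : ∀ j ∈ Finset.Icc 1 J, Integrable (fun ω =>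
      μ j ^ 2 * (8 * ‖what j ω - wstar j‖ ^ 2 + 2 * ‖what j ω - wstar (j - 1)‖ ^ 2)) P := by
    intro j hj
    exact (((hxint j hj j).const_mul 8).add ((hxint j hj (j - 1)).const_mul 2)).const_mul _
  have hgint : Integrable g P :=
    (integrable_finset_sum _ htermint).const_mul _
  have hmono : (∫ ω, f ω ^ 2 ∂P) ≤ ∫ ω, g ω ∂P :=
    integral_mono hint hgint fun ω => hgle ω
  -- compute ∫ g
  have hgeq : (∫ ω, g ω ∂P) = (J : ℝ) * ∑ j ∈ Finset.Icc 1 J,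
      μ j ^ 2 * (8 * (∫ ω, ‖what j ω - wstar j‖ ^ 2 ∂P) +
        2 * (∫ ω, ‖what j ω - wstar (j - 1)‖ ^ 2 ∂P)) := by
    rw [hg]
    rw [integral_const_mul, integral_finset_sum _ htermint]
    congr 1
    refine Finset.sum_congr rfl fun j hj => ?_
    rw [integral_const_mul, integral_add ((hxint j hj j).const_mul 8)
      ((hxint j hj (j - 1)).const_mul 2), integral_const_mul, integral_const_mul]
  -- bound each term
  have hbound : ∀ j ∈ Finset.Icc 1 J,
      μ j ^ 2 * (8 * (∫ ω, ‖what j ω - wstar j‖ ^ 2 ∂P) +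
        2 * (∫ ω, ‖what j ω - wstar (j - 1)‖ ^ 2 ∂P)) ≤ 16 * (μ j * δ j) := by
    intro j hj
    obtain ⟨hj1, hj2⟩ := Finset.mem_Icc.mp hj
    have hx := h2 j hj1 hj2
    have hy := h1 j hj1 hj2
    have hμeq : μ j = 2 * μ (j - 1) := by
      have h := hμ (j - 1)
      rwa [Nat.sub_add_cancel hj1] at h
    set Ix := ∫ ω, ‖what j ω - wstar j‖ ^ 2 ∂P
    set Iy := ∫ ω, ‖what j ω - wstar (j - 1)‖ ^ 2 ∂P
    have ha : (0 : ℝ) < μ (j - 1) := hμpos (j - 1)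
    have hx' : Ix * μ j ≤ δ j := (le_div_iff₀ (hμpos j)).mp hx
    have hy' : Iy * μ (j - 1) ≤ 2 * δ j := (le_div_iff₀ ha).mp hy
    rw [hμeq] at hx' ⊢
    nlinarith [mul_le_mul_of_nonneg_left hx' ha.le, mul_le_mul_of_nonneg_left hy' ha.le]
  calc (∫ ω, f ω ^ 2 ∂P) ≤ ∫ ω, g ω ∂P := hmono
    _ = _ := hgeq
    _ ≤ (J : ℝ) * ∑ j ∈ Finset.Icc 1 J, 16 * (μ j * δ j) :=
      mul_le_mul_of_nonneg_left (Finset.sum_le_sum hbound) (Nat.cast_nonneg J)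
    _ = 16 * (J : ℝ) * ∑ j ∈ Finset.Icc 1 J, μ j * δ j := by
      rw [← Finset.mul_sum]; ring
end
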